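/- Algebraic Carnap categoricity of IPC: Let A be an algebra with constants 0, 1 and binary operations ∧, ∨, → such that the relation a ≤ b ⟺ a ∧ b = a is a partial order with greatest element 1. Suppose that whenever ψ₁,…,ψₙ ⊢_IPC φ, then for all valuations v : Prop → A and all c ∈ A, if c ≤ ⟦ψᵢ⟧ᵥ for all i then c ≤ ⟦φ⟧ᵥ (where ⟦·⟧ᵥ is the unique homomorphic extension of v, and for n = 0 the conclusion is ⟦φ⟧ᵥ = 1). Then A is a Heyting algebra with these operations. -/

import Mathlib

/-!
Every Heyting-algebra axiom is an equation whose two sides are the values of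
IPC-interderivable formulas. Soundness applied with `c := ⟦φ⟧` (using `c ≤ c`) turns
`φ ⊢ ψ` into `⟦φ⟧ ≤ ⟦ψ⟧`, so interderivable formulas get equal values by antisymmetry;
the two unit laws come instead from the theorems `⊤` and `p → p`.
-/

/-- Formulas in the language with ⊥, ⊤, ∧, ∨, → over atoms ℕ. -/
inductive Form : Type where
  | atom : ℕ → Form
  | bot  : Form
  | top  : Form
  | and  : Form → Form → Form
  | or   : Form → Form → Form
  | imp  : Form → Form → Form

/-- Intuitionistic propositional consequence (natural deduction). -/
inductive IPC : Set Form → Form → Prop where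
  | ax    {Γ : Set Form} {φ : Form} : φ ∈ Γ → IPC Γ φ
  | topI  {Γ : Set Form} : IPC Γ Form.top
  | botE  {Γ : Set Form} {φ : Form} : IPC Γ Form.bot → IPC Γ φ
  | andI  {Γ : Set Form} {φ ψ : Form} : IPC Γ φ → IPC Γ ψ → IPC Γ (Form.and φ ψ)
  | andE1 {Γ : Set Form} {φ ψ : Form} : IPC Γ (Form.and φ ψ) → IPC Γ φ
  | andE2 {Γ : Set Form} {φ ψ : Form} : IPC Γ (Form.and φ ψ) → IPC Γ ψ
  | orI1  {Γ : Set Form} {φ ψ : Form} : IPC Γ φ → IPC Γ (Form.or φ ψ)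
  | orI2  {Γ : Set Form} {φ ψ : Form} : IPC Γ ψ → IPC Γ (Form.or φ ψ)
  | orE   {Γ : Set Form} {φ ψ χ : Form} : IPC Γ (Form.or φ ψ) →
      IPC (insert φ Γ) χ → IPC (insert ψ Γ) χ → IPC Γ χ
  | impI  {Γ : Set Form} {φ ψ : Form} : IPC (insert φ Γ) ψ → IPC Γ (Form.imp φ ψ)
  | impE  {Γ : Set Form} {φ ψ : Form} : IPC Γ (Form.imp φ ψ) → IPC Γ φ → IPC Γ ψ

/-- The unique homomorphic extension of a valuation v : atoms → A. -/
def evalA {A : Type*} (z o : A) (meet join himp : A → A → A) (v : ℕ → A) :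
    Form → A
  | Form.atom p => v p
  | Form.bot => z
  | Form.top => o
  | Form.and φ ψ => meet (evalA z o meet join himp v φ) (evalA z o meet join himp v ψ)
  | Form.or φ ψ => join (evalA z o meet join himp v φ) (evalA z o meet join himp v ψ)
  | Form.imp φ ψ => himp (evalA z o meet join himp v φ) (evalA z o meet join himp v ψ)

def Form.Interderivable (φ ψ : Form) : Prop :=
  IPC {φ} ψ ∧ IPC {ψ} φ

namespace IPC

variable {Γ : Set Form} {φ ψ χ : Form}

theorem ax_insert : IPC (insert φ Γ) φ :=
  ax (Set.mem_insert _ _)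

theorem ax_singleton : IPC {φ} φ :=
  ax rfl

theorem ax_insert_singleton : IPC (insert ψ {φ}) φ :=
  ax (Set.mem_insert_of_mem _ rfl)

theorem to_list_singleton (h : IPC {φ} ψ) : IPC {ρ | ρ ∈ [φ]} ψ := by
  simpa using h

theorem to_list_nil (h : IPC ∅ φ) : IPC {ρ | ρ ∈ ([] : List Form)} φ := by
  simpa using h

theorem imp_self : IPC ∅ (φ.imp φ) :=
  impI ax_insert

end IPC

namespace Form.Interderivable

open IPC

variable {φ ψ χ : Form}

theorem and_comm : Interderivable (φ.and ψ) (ψ.and φ) :=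
  ⟨andI (andE2 ax_singleton) (andE1 ax_singleton),
    andI (andE2 ax_singleton) (andE1 ax_singleton)⟩

theorem and_assoc : Interderivable (φ.and (ψ.and χ)) ((φ.and ψ).and χ) :=
  ⟨andI (andI (andE1 ax_singleton) (andE1 (andE2 ax_singleton))) (andE2 (andE2 ax_singleton)),
    andI (andE1 (andE1 ax_singleton)) (andI (andE2 (andE1 ax_singleton)) (andE2 ax_singleton))⟩

theorem or_comm : Interderivable (φ.or ψ) (ψ.or φ) :=
  ⟨orE ax_singleton (orI2 ax_insert) (orI1 ax_insert),
    orE ax_singleton (orI2 ax_insert) (orI1 ax_insert)⟩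

theorem or_assoc : Interderivable (φ.or (ψ.or χ)) ((φ.or ψ).or χ) :=
  ⟨orE ax_singleton (orI1 (orI1 ax_insert))
      (orE ax_insert (orI1 (orI2 ax_insert)) (orI2 ax_insert)),
    orE ax_singleton (orE ax_insert (orI1 ax_insert) (orI2 (orI1 ax_insert)))
      (orI2 (orI2 ax_insert))⟩

theorem and_or_self : Interderivable (φ.and (φ.or ψ)) φ :=
  ⟨andE1 ax_singleton, andI ax_singleton (orI1 ax_singleton)⟩

theorem or_and_self : Interderivable (φ.or (φ.and ψ)) φ :=
  ⟨orE ax_singleton ax_insert (andE1 ax_insert), orI1 ax_singleton⟩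

theorem or_bot : Interderivable (φ.or bot) φ :=
  ⟨orE ax_singleton ax_insert (botE ax_insert), orI1 ax_singleton⟩

theorem and_imp_self : Interderivable (φ.and (φ.imp ψ)) (φ.and ψ) :=
  ⟨andI (andE1 ax_singleton) (impE (andE2 ax_singleton) (andE1 ax_singleton)),
    andI (andE1 ax_singleton) (impI (andE2 ax_insert_singleton))⟩

theorem imp_and_self : Interderivable ((φ.imp ψ).and ψ) ψ :=
  ⟨andE2 ax_singleton, andI (impI ax_insert_singleton) ax_singleton⟩

theorem imp_and : Interderivable (φ.imp (ψ.and χ)) ((φ.imp ψ).and (φ.imp χ)) :=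
  ⟨andI (impI (andE1 (impE ax_insert_singleton ax_insert)))
      (impI (andE2 (impE ax_insert_singleton ax_insert))),
    impI (andI (impE (andE1 ax_insert_singleton) ax_insert)
      (impE (andE2 ax_insert_singleton) ax_insert))⟩

end Form.Interderivable

structure IsIPCModel {A : Type*} (z o : A) (meet join himp : A → A → A) : Prop where
  meet_self : ∀ a : A, meet a a = a
  antisymm : ∀ a b : A, meet a b = a → meet b a = b → a = b
  sound : ∀ (L : List Form) (φ : Form), IPC {ψ | ψ ∈ L} φ →
    ∀ (v : ℕ → A) (c : A),
      (∀ ψ ∈ L, meet c (evalA z o meet join himp v ψ) = c) →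
      meet c (evalA z o meet join himp v φ) = c

def atomVal {A : Type*} (a b c : A) : ℕ → A
  | 0 => a
  | 1 => b
  | _ => c

namespace IsIPCModel

open Form

variable {A : Type*} {z o : A} {meet join himp : A → A → A}
  (H : IsIPCModel z o meet join himp)
include H

theorem meet_eval_of_theorem {φ : Form} (hφ : IPC ∅ φ) (v : ℕ → A) (c : A) :
    meet c (evalA z o meet join himp v φ) = c :=
  H.sound [] φ hφ.to_list_nil v c (by simp)

theorem meet_eval_of_derives {φ ψ : Form} (h : IPC {φ} ψ) (v : ℕ → A) :
    meet (evalA z o meet join himp v φ) (evalA z o meet join himp v ψ) =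
      evalA z o meet join himp v φ :=
  H.sound [φ] ψ h.to_list_singleton v _ (by simpa using H.meet_self _)

theorem eval_eq_of_interderivable {φ ψ : Form} (h : Interderivable φ ψ) (v : ℕ → A) :
    evalA z o meet join himp v φ = evalA z o meet join himp v ψ :=
  H.antisymm _ _ (H.meet_eval_of_derives h.1 v) (H.meet_eval_of_derives h.2 v)

theorem meet_comm (a b : A) : meet a b = meet b a :=
  H.eval_eq_of_interderivable
    (Interderivable.and_comm (φ := atom 0) (ψ := atom 1)) (atomVal a b b)

theorem meet_assoc (a b c : A) : meet a (meet b c) = meet (meet a b) c :=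
  H.eval_eq_of_interderivable
    (Interderivable.and_assoc (φ := atom 0) (ψ := atom 1) (χ := atom 2)) (atomVal a b c)

theorem join_comm (a b : A) : join a b = join b a :=
  H.eval_eq_of_interderivable
    (Interderivable.or_comm (φ := atom 0) (ψ := atom 1)) (atomVal a b b)

theorem join_assoc (a b c : A) : join a (join b c) = join (join a b) c :=
  H.eval_eq_of_interderivable
    (Interderivable.or_assoc (φ := atom 0) (ψ := atom 1) (χ := atom 2)) (atomVal a b c)

theorem meet_join_self (a b : A) : meet a (join a b) = a :=
  H.eval_eq_of_interderivable
    (Interderivable.and_or_self (φ := atom 0) (ψ := atom 1)) (atomVal a b b)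

theorem join_meet_self (a b : A) : join a (meet a b) = a :=
  H.eval_eq_of_interderivable
    (Interderivable.or_and_self (φ := atom 0) (ψ := atom 1)) (atomVal a b b)

theorem join_bot (a : A) : join a z = a :=
  H.eval_eq_of_interderivable (Interderivable.or_bot (φ := atom 0)) (atomVal a a a)

theorem meet_top (a : A) : meet a o = a :=
  H.meet_eval_of_theorem IPC.topI (atomVal a a a) a

theorem himp_self (a : A) : himp a a = o :=
  H.antisymm _ _ (H.meet_top _)
    (H.meet_eval_of_theorem (IPC.imp_self (φ := atom 0)) (atomVal a a a) o)

theorem meet_himp_self (a b : A) : meet a (himp a b) = meet a b :=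
  H.eval_eq_of_interderivable
    (Interderivable.and_imp_self (φ := atom 0) (ψ := atom 1)) (atomVal a b b)

theorem himp_meet_self (a b : A) : meet (himp a b) b = b :=
  H.eval_eq_of_interderivable
    (Interderivable.imp_and_self (φ := atom 0) (ψ := atom 1)) (atomVal a b b)

theorem himp_meet (a b c : A) : himp a (meet b c) = meet (himp a b) (himp a c) :=
  H.eval_eq_of_interderivable
    (Interderivable.imp_and (φ := atom 0) (ψ := atom 1) (χ := atom 2)) (atomVal a b c)

end IsIPCModel

theorem algebraic_carnap_IPC_general {A : Type*} (z o : A) (meet join himp : A → A → A)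
    -- a ≤ b ⟺ a ∧ b = a is a partial order with greatest element 1
    (hrefl : ∀ a : A, meet a a = a)
    (hantisymm : ∀ a b : A, meet a b = a → meet b a = b → a = b)
    -- consistency with ⊢_IPC
    (hcons : ∀ (L : List Form) (φ : Form), IPC {ψ | ψ ∈ L} φ →
      ∀ (v : ℕ → A) (c : A),
        (∀ ψ ∈ L, meet c (evalA z o meet join himp v ψ) = c) →
        meet c (evalA z o meet join himp v φ) = c) :
    -- conclusion: (A, z, o, meet, join, himp) is a Heyting algebra, i.e.
    -- a bounded lattice satisfying the defining equations of Heyting algebras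
    (∀ a b : A, meet a b = meet b a) ∧
    (∀ a b c : A, meet a (meet b c) = meet (meet a b) c) ∧
    (∀ a b : A, join a b = join b a) ∧
    (∀ a b c : A, join a (join b c) = join (join a b) c) ∧
    (∀ a b : A, meet a (join a b) = a) ∧
    (∀ a b : A, join a (meet a b) = a) ∧
    (∀ a : A, meet a o = a) ∧
    (∀ a : A, join a z = a) ∧
    (∀ a : A, himp a a = o) ∧
    (∀ a b : A, meet a (himp a b) = meet a b) ∧
    (∀ a b : A, meet (himp a b) b = b) ∧
    (∀ a b c : A, himp a (meet b c) = meet (himp a b) (himp a c)) :=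
  let H : IsIPCModel z o meet join himp := ⟨hrefl, hantisymm, hcons⟩
  ⟨H.meet_comm, H.meet_assoc, H.join_comm, H.join_assoc, H.meet_join_self, H.join_meet_self,
    H.meet_top, H.join_bot, H.himp_self, H.meet_himp_self, H.himp_meet_self, H.himp_meet⟩

/-- Algebraic Carnap categoricity of IPC: an algebraic interpretation consistent
with ⊢_IPC is a Heyting algebra (with a ≤ b ⟺ a ∧ b = a). -/
theorem algebraic_carnap_IPC {A : Type*} (z o : A) (meet join himp : A → A → A)
    -- a ≤ b ⟺ a ∧ b = a is a partial order with greatest element 1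
    (hrefl : ∀ a : A, meet a a = a)
    (hantisymm : ∀ a b : A, meet a b = a → meet b a = b → a = b)
    (htrans : ∀ a b c : A, meet a b = a → meet b c = b → meet a c = a)
    (htop : ∀ a : A, meet a o = a)
    -- consistency with ⊢_IPC
    (hcons : ∀ (L : List Form) (φ : Form), IPC {ψ | ψ ∈ L} φ →
      ∀ (v : ℕ → A) (c : A),
        (∀ ψ ∈ L, meet c (evalA z o meet join himp v ψ) = c) →
        meet c (evalA z o meet join himp v φ) = c) :
    -- conclusion: (A, z, o, meet, join, himp) is a Heyting algebra, i.e.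
    -- a bounded lattice satisfying the defining equations of Heyting algebras
    (∀ a b : A, meet a b = meet b a) ∧
    (∀ a b c : A, meet a (meet b c) = meet (meet a b) c) ∧
    (∀ a b : A, join a b = join b a) ∧
    (∀ a b c : A, join a (join b c) = join (join a b) c) ∧
    (∀ a b : A, meet a (join a b) = a) ∧
    (∀ a b : A, join a (meet a b) = a) ∧
    (∀ a : A, meet a o = a) ∧
    (∀ a : A, join a z = a) ∧
    (∀ a : A, himp a a = o) ∧
    (∀ a b : A, meet a (himp a b) = meet a b) ∧
    (∀ a b : A, meet (himp a b) b = b) ∧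
    (∀ a b c : A, himp a (meet b c) = meet (himp a b) (himp a c)) :=
  algebraic_carnap_IPC_general z o meet join himp hrefl hantisymm hcons
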